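/- Weighted L² → L^∞ and L¹ → L^∞ kernel estimates for the heat semigroup on ℝ^d. Let d ≥ 1, let β be a multi-index on ℝ^d with |β| ≤ 1 and let s ∈ [0, |β|]. Then there exists C ≥ 0 such that for every t > 0, writing (T_t φ)(x) = ⟨x⟩^{−s} ∫_{ℝ^d} ∂^β_x K(t, x−y) ⟨y⟩^{−s} φ(y) dy, one has ‖T_t φ‖_{L^∞(ℝ^d)} ≤ C t^{−d/4 − |β|/2 − s/2} ‖φ‖_{L²(ℝ^d)} for all φ ∈ L²(ℝ^d, ℂ), and ‖T_t φ‖_{L^∞(ℝ^d)} ≤ C t^{−d/2 − |β|/2 − s/2} ‖φ‖_{L¹(ℝ^d)} for all φ ∈ L¹(ℝ^d, ℂ). -/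

import Mathlib

open MeasureTheory
open scoped ENNReal

noncomputable section

/-- `ℝ^d`, as a Euclidean space. -/
abbrev Ed (d : ℕ) := EuclideanSpace ℝ (Fin d)

/-- The Japanese bracket `⟨x⟩ = (1 + |x|²)^(1/2)`. -/
noncomputable def jap {d : ℕ} (x : Ed d) : ℝ := Real.sqrt (1 + ‖x‖ ^ 2)

/-- The heat kernel `K(t,x) = (4πt)^{-d/2} exp(-|x|²/(4t))` on `ℝ^d`. -/
noncomputable def heatKernel (d : ℕ) (t : ℝ) (x : Ed d) : ℝ :=
  (4 * Real.pi * t) ^ (-(d : ℝ) / 2) * Real.exp (-‖x‖ ^ 2 / (4 * t))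

/-- For a multi-index `β` with `|β| ≤ 1`, the derivative `∂^β_x K(t,x)` of the heat kernel:
for `β = 0` it is `K(t,x)` itself, and for `β` the `j`-th coordinate direction it is
`-(xⱼ/(2t)) K(t,x)`. -/
noncomputable def heatKernelDeriv (d : ℕ) (β : Fin d → ℕ) (t : ℝ) (x : Ed d) : ℝ :=
  (∏ j, (-(x j) / (2 * t)) ^ (β j)) * heatKernel d t x

/-!
By Peetre's inequality `⟨x⟩^{-s} ⟨y⟩^{-s} ≤ 2^{s/2} ⟨x - y⟩^{-s}`, the weighted kernel
`⟨x⟩^{-s} ∂^β K(t, x - y) ⟨y⟩^{-s}` is dominated by a convolution kernel in `x - y`. Since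
`|∂^β K(t, z)| ≤ (|z| / 2t)^{|β|} K(t, z)`, `|z|^{|β|} ⟨z⟩^{-s} ≤ |z|^{|β| - s}` and
`|z|^a e^{-|z|²/8t} ≤ (8t)^{a/2}` for `0 ≤ a ≤ 2`, that kernel is at most
`C t^{-d/2 - |β|/2 - s/2} e^{-|z|²/8t}`. Hölder's inequality at each point `x` then gives both
estimates: this Gaussian has sup norm `1` and `L²` norm `(4πt)^{d/4}`.
-/

open Real

section IntegralOperator

variable {α E : Type*} [MeasurableSpace α] {μ : Measure α} [NormedAddCommGroup E] [NormedSpace ℝ E]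

theorem enorm_integral_smul_le_of_abs_le {f g : α → ℝ} (hfg : ∀ y, |f y| ≤ g y)
    (hg : AEStronglyMeasurable g μ) {φ : α → E} (hφ : AEStronglyMeasurable φ μ)
    {p q : ℝ≥0∞} [p.HolderTriple q 1] :
    ‖∫ y, f y • φ y ∂μ‖ₑ ≤ eLpNorm g p μ * eLpNorm φ q μ :=
  calc ‖∫ y, f y • φ y ∂μ‖ₑ ≤ ∫⁻ y, ‖f y • φ y‖ₑ ∂μ := enorm_integral_le_lintegral_enorm _
    _ ≤ ∫⁻ y, ‖g y • φ y‖ₑ ∂μ := by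
        gcongr with y
        rw [enorm_smul, enorm_smul]
        gcongr
        exact enorm_le_iff_norm_le.mpr ((hfg y).trans (le_abs_self _))
    _ = eLpNorm (g • φ) 1 μ := eLpNorm_one_eq_lintegral_enorm.symm
    _ ≤ eLpNorm g p μ * eLpNorm φ q μ := eLpNorm_smul_le_mul_eLpNorm hφ hg

variable {G : Type*} [AddGroup G] [MeasurableSpace G] [MeasurableAdd G] [MeasurableNeg G]
  {μ : Measure G} [μ.IsAddLeftInvariant] [μ.IsNegInvariant]

theorem eLpNorm_comp_sub_left {γ : G → ℝ} (hγ : AEStronglyMeasurable γ μ) (x : G) (p : ℝ≥0∞) :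
    eLpNorm (fun y => γ (x - y)) p μ = eLpNorm γ p μ :=
  eLpNorm_comp_measurePreserving hγ (Measure.measurePreserving_sub_left μ x)

theorem eLpNorm_top_weighted_kernel_integral_le {w k γ : G → ℝ} {A : ℝ}
    (hkγ : ∀ x y, |w x * k (x - y) * w y| ≤ A * γ (x - y)) (hγ : AEStronglyMeasurable γ μ)
    {φ : G → E} (hφ : AEStronglyMeasurable φ μ) {p q : ℝ≥0∞} [p.HolderTriple q 1] :
    eLpNorm (fun x => w x • ∫ y, (k (x - y) * w y) • φ y ∂μ) ∞ μ ≤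
      ‖A‖ₑ * eLpNorm γ p μ * eLpNorm φ q μ := by
  rw [eLpNorm_exponent_top, ← eLpNorm_const_smul]
  refine eLpNormEssSup_le_of_ae_enorm_bound (.of_forall fun x => ?_)
  rw [← integral_smul, ← eLpNorm_comp_sub_left (hγ.const_smul A) x]
  simp_rw [smul_smul, ← mul_assoc]
  exact enorm_integral_smul_le_of_abs_le (hkγ x)
    ((hγ.const_smul A).comp_measurePreserving (Measure.measurePreserving_sub_left μ x)) hφ

end IntegralOperator

section Gaussian

variable {V : Type*} [NormedAddCommGroup V] [InnerProductSpace ℝ V] [FiniteDimensional ℝ V]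
  [MeasurableSpace V] [BorelSpace V]

theorem integrable_rexp_neg_mul_sq_norm {b : ℝ} (hb : 0 < b) :
    Integrable (fun v : V => exp (-b * ‖v‖ ^ 2)) :=
  Integrable.of_integral_ne_zero <| by
    rw [GaussianFourier.integral_rexp_neg_mul_sq_norm hb]; positivity

theorem eLpNorm_two_rexp_neg_mul_sq_norm {b : ℝ} (hb : 0 < b) :
    eLpNorm (fun v : V => exp (-b * ‖v‖ ^ 2)) 2 volume =
      ENNReal.ofReal ((π / (2 * b)) ^ (Module.finrank ℝ V / 4 : ℝ)) := by
  have hsq (v : V) :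
      ‖exp (-b * ‖v‖ ^ 2)‖ₑ ^ (2 : ℝ) = ENNReal.ofReal (exp (-(2 * b) * ‖v‖ ^ 2)) := by
    rw [Real.enorm_of_nonneg (exp_pos _).le,
      ENNReal.ofReal_rpow_of_nonneg (exp_pos _).le two_pos.le, ← exp_mul]
    ring_nf
  rw [eLpNorm_eq_lintegral_rpow_enorm_toReal two_ne_zero ENNReal.ofNat_ne_top]
  simp only [ENNReal.toReal_ofNat, hsq]
  rw [← ofReal_integral_eq_lintegral_ofReal (integrable_rexp_neg_mul_sq_norm (by positivity))
      (.of_forall fun _ => (exp_pos _).le),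
    GaussianFourier.integral_rexp_neg_mul_sq_norm (by positivity),
    ENNReal.ofReal_rpow_of_nonneg (by positivity) (by norm_num), ← rpow_mul (by positivity)]
  ring_nf

theorem eLpNorm_top_rexp_neg_mul_sq_norm_le {W : Type*} [SeminormedAddGroup W] [MeasurableSpace W]
    (μ : Measure W) {b : ℝ} (hb : 0 ≤ b) :
    eLpNorm (fun v : W => exp (-b * ‖v‖ ^ 2)) ∞ μ ≤ 1 := by
  rw [eLpNorm_exponent_top]
  refine eLpNormEssSup_le_of_ae_enorm_bound (.of_forall fun v => ?_)
  rw [Real.enorm_of_nonneg (exp_pos _).le, ENNReal.ofReal_le_one, exp_le_one_iff]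
  exact mul_nonpos_of_nonpos_of_nonneg (neg_nonpos.2 hb) (sq_nonneg _)

end Gaussian

section JapaneseBracket

variable {d : ℕ}

theorem one_le_jap (x : Ed d) : 1 ≤ jap x :=
  Real.one_le_sqrt.mpr (le_add_of_nonneg_right (sq_nonneg _))

theorem jap_pos (x : Ed d) : 0 < jap x := one_pos.trans_le (one_le_jap x)

theorem norm_le_jap (x : Ed d) : ‖x‖ ≤ jap x :=
  Real.le_sqrt_of_sq_le (le_add_of_nonneg_left zero_le_one)

theorem jap_rpow_neg_nonneg (s : ℝ) (x : Ed d) : 0 ≤ jap x ^ (-s) :=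
  rpow_nonneg (jap_pos x).le _

theorem jap_sub_le (x y : Ed d) : jap (x - y) ≤ √2 * (jap x * jap y) := by
  rw [jap, jap, jap, ← sqrt_mul (by positivity), ← sqrt_mul zero_le_two]
  apply sqrt_le_sqrt
  have h : ‖x - y‖ ^ 2 ≤ (‖x‖ + ‖y‖) ^ 2 := pow_le_pow_left₀ (norm_nonneg _) (norm_sub_le x y) 2
  nlinarith [sq_nonneg (‖x‖ - ‖y‖), sq_nonneg (‖x‖ * ‖y‖)]

/-- Peetre's inequality. -/
theorem jap_rpow_neg_mul_jap_rpow_neg_le {s : ℝ} (hs : 0 ≤ s) (x y : Ed d) :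
    jap x ^ (-s) * jap y ^ (-s) ≤ 2 ^ (s / 2) * jap (x - y) ^ (-s) := by
  have hsqrt : (√2) ^ (-s) = (2 ^ (s / 2))⁻¹ := by
    rw [sqrt_eq_rpow, ← rpow_mul zero_le_two, ← rpow_neg zero_le_two]
    ring_nf
  have hle : jap (x - y) / √2 ≤ jap x * jap y :=
    div_le_of_le_mul₀ (sqrt_nonneg 2) (mul_pos (jap_pos x) (jap_pos y)).le
      ((jap_sub_le x y).trans_eq (mul_comm _ _))
  calc jap x ^ (-s) * jap y ^ (-s) = (jap x * jap y) ^ (-s) :=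
        (mul_rpow (jap_pos x).le (jap_pos y).le).symm
    _ ≤ (jap (x - y) / √2) ^ (-s) :=
        rpow_le_rpow_of_nonpos (div_pos (jap_pos _) (by positivity)) hle (neg_nonpos.mpr hs)
    _ = 2 ^ (s / 2) * jap (x - y) ^ (-s) := by
        rw [div_rpow (jap_pos _).le (sqrt_nonneg 2), hsqrt, div_inv_eq_mul, mul_comm]

theorem norm_rpow_mul_jap_rpow_neg_le {a s : ℝ} (hs : 0 ≤ s) (hsa : s ≤ a) (z : Ed d) :
    ‖z‖ ^ a * jap z ^ (-s) ≤ ‖z‖ ^ (a - s) := by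
  rcases (norm_nonneg z).eq_or_lt with hz | hz
  · rw [← hz]
    calc (0 : ℝ) ^ a * jap z ^ (-s) ≤ 0 ^ a * 1 :=
          mul_le_mul_of_nonneg_left
            (rpow_le_one_of_one_le_of_nonpos (one_le_jap z) (neg_nonpos.mpr hs))
            (rpow_nonneg le_rfl a)
      _ ≤ 0 ^ (a - s) := by
          rw [mul_one]
          exact rpow_le_rpow_of_exponent_ge' le_rfl zero_le_one (by linarith) (by linarith)
  · calc ‖z‖ ^ a * jap z ^ (-s) ≤ ‖z‖ ^ a * ‖z‖ ^ (-s) :=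
          mul_le_mul_of_nonneg_left (rpow_le_rpow_of_nonpos hz (norm_le_jap z) (neg_nonpos.mpr hs))
            (rpow_nonneg hz.le a)
      _ = ‖z‖ ^ (a - s) := by rw [← rpow_add hz, sub_eq_add_neg]

end JapaneseBracket

theorem rpow_le_one_add {u θ : ℝ} (hu : 0 ≤ u) (hθ₀ : 0 ≤ θ) (hθ₁ : θ ≤ 1) : u ^ θ ≤ 1 + u := by
  rcases le_total u 1 with h | h
  · exact (rpow_le_one hu h hθ₀).trans (by linarith)
  · calc u ^ θ ≤ u ^ (1 : ℝ) := rpow_le_rpow_of_exponent_le h hθ₁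
      _ ≤ 1 + u := by rw [rpow_one]; linarith

theorem rpow_mul_exp_neg_mul_sq_le {r a c : ℝ} (hr : 0 ≤ r) (ha₀ : 0 ≤ a) (ha₂ : a ≤ 2)
    (hc : 0 < c) : r ^ a * exp (-c * r ^ 2) ≤ c ^ (-(a / 2)) := by
  have hsplit : r ^ a = (c * r ^ 2) ^ (a / 2) * c ^ (-(a / 2)) := by
    rw [mul_rpow hc.le (sq_nonneg r), mul_right_comm, ← rpow_add hc, add_neg_cancel, rpow_zero,
      one_mul, ← rpow_natCast, ← rpow_mul hr]
    ring_nf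
  have hexp : (c * r ^ 2) ^ (a / 2) ≤ exp (c * r ^ 2) :=
    (rpow_le_one_add (by positivity) (by linarith) (by linarith)).trans
      (by linarith [add_one_le_exp (c * r ^ 2)])
  calc r ^ a * exp (-c * r ^ 2) ≤ exp (c * r ^ 2) * c ^ (-(a / 2)) * exp (-c * r ^ 2) := by
        rw [hsplit]; gcongr
    _ = c ^ (-(a / 2)) := by
        rw [mul_right_comm, ← exp_add, neg_mul, add_neg_cancel, exp_zero, one_mul]

section HeatKernel

variable {d : ℕ}

theorem heatKernel_pos {t : ℝ} (ht : 0 < t) (z : Ed d) : 0 < heatKernel d t z := by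
  unfold heatKernel
  positivity

theorem abs_heatKernelDeriv_le {t : ℝ} (ht : 0 < t) (β : Fin d → ℕ) (z : Ed d) :
    |heatKernelDeriv d β t z| ≤ (‖z‖ / (2 * t)) ^ (∑ j, β j) * heatKernel d t z := by
  rw [heatKernelDeriv, abs_mul, abs_of_pos (heatKernel_pos ht z), Finset.abs_prod,
    ← Finset.prod_pow_eq_pow_sum]
  refine mul_le_mul_of_nonneg_right
    (Finset.prod_le_prod (fun _ _ => abs_nonneg _) fun j _ => ?_) (heatKernel_pos ht z).le
  rw [abs_pow, abs_div, abs_neg, abs_of_pos (by positivity : (0 : ℝ) < 2 * t)]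
  gcongr
  exact PiLp.norm_apply_le z j

theorem abs_heatKernelDeriv_mul_jap_rpow_neg_le {β : Fin d → ℕ} (hβ : ∑ j, β j ≤ 1) {s : ℝ}
    (hs₀ : 0 ≤ s) (hsβ : s ≤ ((∑ j, β j : ℕ) : ℝ)) {t : ℝ} (ht : 0 < t) (z : Ed d) :
    |heatKernelDeriv d β t z| * jap z ^ (-s) ≤
      2 ^ (-((∑ j, β j : ℕ) : ℝ)) * 8 ^ ((((∑ j, β j : ℕ) : ℝ) - s) / 2) *
        (4 * π) ^ (-(d : ℝ) / 2) * t ^ (-(d : ℝ) / 2 - ((∑ j, β j : ℕ) : ℝ) / 2 - s / 2) *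
          exp (-(8 * t)⁻¹ * ‖z‖ ^ 2) := by
  set b : ℝ := ((∑ j, β j : ℕ) : ℝ)
  have hb : b ≤ 1 := Nat.cast_le_one.mpr hβ
  have h8t : 0 < 8 * t := by positivity
  have hgauss : exp (-‖z‖ ^ 2 / (4 * t)) =
      exp (-(8 * t)⁻¹ * ‖z‖ ^ 2) * exp (-(8 * t)⁻¹ * ‖z‖ ^ 2) := by
    rw [← exp_add]; ring_nf
  have hdecay : ‖z‖ ^ (b - s) * exp (-(8 * t)⁻¹ * ‖z‖ ^ 2) ≤ (8 * t) ^ ((b - s) / 2) := by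
    have h := rpow_mul_exp_neg_mul_sq_le (norm_nonneg z) (sub_nonneg.2 hsβ) (by linarith)
      (inv_pos.2 h8t)
    rwa [inv_rpow h8t.le, ← rpow_neg h8t.le, neg_neg] at h
  have hpow : t ^ (-b) * t ^ (-(d : ℝ) / 2) * t ^ ((b - s) / 2) =
      t ^ (-(d : ℝ) / 2 - b / 2 - s / 2) := by
    rw [← rpow_add ht, ← rpow_add ht]; ring_nf
  calc |heatKernelDeriv d β t z| * jap z ^ (-s)
      ≤ (‖z‖ / (2 * t)) ^ (∑ j, β j) * heatKernel d t z * jap z ^ (-s) :=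
        mul_le_mul_of_nonneg_right (abs_heatKernelDeriv_le ht β z) (jap_rpow_neg_nonneg s z)
    _ = (2 * t) ^ (-b) * (4 * π * t) ^ (-(d : ℝ) / 2) * (‖z‖ ^ b * jap z ^ (-s)) *
          exp (-‖z‖ ^ 2 / (4 * t)) := by
        rw [heatKernel, div_pow, ← rpow_natCast, ← rpow_natCast, div_eq_mul_inv,
          ← rpow_neg (by positivity)]
        ring
    _ ≤ (2 * t) ^ (-b) * (4 * π * t) ^ (-(d : ℝ) / 2) * ‖z‖ ^ (b - s) *
          exp (-‖z‖ ^ 2 / (4 * t)) := by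
        gcongr
        exact norm_rpow_mul_jap_rpow_neg_le hs₀ hsβ z
    _ = (2 * t) ^ (-b) * (4 * π * t) ^ (-(d : ℝ) / 2) *
          (‖z‖ ^ (b - s) * exp (-(8 * t)⁻¹ * ‖z‖ ^ 2)) * exp (-(8 * t)⁻¹ * ‖z‖ ^ 2) := by
        rw [hgauss]; ring
    _ ≤ (2 * t) ^ (-b) * (4 * π * t) ^ (-(d : ℝ) / 2) * (8 * t) ^ ((b - s) / 2) *
          exp (-(8 * t)⁻¹ * ‖z‖ ^ 2) := by
        gcongr
    _ = _ := by
        rw [mul_rpow zero_le_two ht.le, mul_rpow (by positivity) ht.le,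
          mul_rpow (by norm_num) ht.le, ← hpow]
        ring

theorem exists_abs_weighted_heatKernelDeriv_le {β : Fin d → ℕ} (hβ : ∑ j, β j ≤ 1) {s : ℝ}
    (hs₀ : 0 ≤ s) (hsβ : s ≤ ((∑ j, β j : ℕ) : ℝ)) :
    ∃ C, 0 ≤ C ∧ ∀ t, 0 < t → ∀ x y : Ed d,
      |jap x ^ (-s) * heatKernelDeriv d β t (x - y) * jap y ^ (-s)| ≤
        C * t ^ (-(d : ℝ) / 2 - ((∑ j, β j : ℕ) : ℝ) / 2 - s / 2) *
          exp (-(8 * t)⁻¹ * ‖x - y‖ ^ 2) := by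
  refine ⟨2 ^ (s / 2) * (2 ^ (-((∑ j, β j : ℕ) : ℝ)) * 8 ^ ((((∑ j, β j : ℕ) : ℝ) - s) / 2) *
    (4 * π) ^ (-(d : ℝ) / 2)), by positivity, fun t ht x y => ?_⟩
  calc |jap x ^ (-s) * heatKernelDeriv d β t (x - y) * jap y ^ (-s)|
      = |heatKernelDeriv d β t (x - y)| * (jap x ^ (-s) * jap y ^ (-s)) := by
        rw [abs_mul, abs_mul, abs_of_nonneg (jap_rpow_neg_nonneg s x),
          abs_of_nonneg (jap_rpow_neg_nonneg s y)]
        ring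
    _ ≤ |heatKernelDeriv d β t (x - y)| * (2 ^ (s / 2) * jap (x - y) ^ (-s)) :=
        mul_le_mul_of_nonneg_left (jap_rpow_neg_mul_jap_rpow_neg_le hs₀ x y) (abs_nonneg _)
    _ = 2 ^ (s / 2) * (|heatKernelDeriv d β t (x - y)| * jap (x - y) ^ (-s)) := by ring
    _ ≤ 2 ^ (s / 2) * (2 ^ (-((∑ j, β j : ℕ) : ℝ)) * 8 ^ ((((∑ j, β j : ℕ) : ℝ) - s) / 2) *
          (4 * π) ^ (-(d : ℝ) / 2) * t ^ (-(d : ℝ) / 2 - ((∑ j, β j : ℕ) : ℝ) / 2 - s / 2) *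
            exp (-(8 * t)⁻¹ * ‖x - y‖ ^ 2)) :=
        mul_le_mul_of_nonneg_left (abs_heatKernelDeriv_mul_jap_rpow_neg_le hβ hs₀ hsβ ht _)
          (by positivity)
    _ = _ := by ring

end HeatKernel

theorem heat_semigroup_weighted_Linfty_bounds_general
    (d : ℕ) (β : Fin d → ℕ) (hβ : ∑ j, β j ≤ 1)
    (s : ℝ) (hs : s ∈ Set.Icc (0 : ℝ) ((∑ j, β j : ℕ) : ℝ)) :
    ∃ C : ℝ, 0 ≤ C ∧
      ∀ t : ℝ, 0 < t →
        (∀ φ : Ed d → ℂ, MemLp φ 2 volume →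
          eLpNorm
              (fun x => jap x ^ (-s) • ∫ y, (heatKernelDeriv d β t (x - y) * jap y ^ (-s)) • φ y)
              ⊤ volume ≤
            ENNReal.ofReal (C * t ^ (-(d : ℝ) / 4 - ((∑ j, β j : ℕ) : ℝ) / 2 - s / 2)) *
              eLpNorm φ 2 volume) ∧
        (∀ φ : Ed d → ℂ, MemLp φ 1 volume →
          eLpNorm
              (fun x => jap x ^ (-s) • ∫ y, (heatKernelDeriv d β t (x - y) * jap y ^ (-s)) • φ y)
              ⊤ volume ≤
            ENNReal.ofReal (C * t ^ (-(d : ℝ) / 2 - ((∑ j, β j : ℕ) : ℝ) / 2 - s / 2)) *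
              eLpNorm φ 1 volume) := by
  obtain ⟨C, hC, hK⟩ := exists_abs_weighted_heatKernelDeriv_le hβ hs.1 hs.2
  have hγ (t : ℝ) : AEStronglyMeasurable (fun z : Ed d => exp (-(8 * t)⁻¹ * ‖z‖ ^ 2)) :=
    (by fun_prop : Continuous _).aestronglyMeasurable
  refine ⟨C * max 1 ((4 * π) ^ ((d : ℝ) / 4)), by positivity,
    fun t ht => ⟨fun φ hφ => ?_, fun φ hφ => ?_⟩⟩
  · refine (eLpNorm_top_weighted_kernel_integral_le (p := 2) (q := 2) (hK t ht) (hγ t)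
      hφ.1).trans ?_
    rw [eLpNorm_two_rexp_neg_mul_sq_norm (by positivity), finrank_euclideanSpace_fin,
      Real.enorm_of_nonneg (by positivity), ← ENNReal.ofReal_mul (by positivity)]
    gcongr ?_ * _
    refine ENNReal.ofReal_le_ofReal ?_
    have h4πt : π / (2 * (8 * t)⁻¹) = 4 * π * t := by field_simp; ring
    calc C * t ^ (-(d : ℝ) / 2 - ((∑ j, β j : ℕ) : ℝ) / 2 - s / 2) *
          (π / (2 * (8 * t)⁻¹)) ^ ((d : ℝ) / 4)
        = C * (4 * π) ^ ((d : ℝ) / 4) *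
            t ^ (-(d : ℝ) / 4 - ((∑ j, β j : ℕ) : ℝ) / 2 - s / 2) := by
          rw [h4πt, Real.mul_rpow (by positivity) ht.le, mul_mul_mul_comm, ← Real.rpow_add ht]
          ring_nf
      _ ≤ _ := by gcongr; exact le_max_right _ _
  · refine (eLpNorm_top_weighted_kernel_integral_le (p := ∞) (q := 1) (hK t ht) (hγ t)
      hφ.1).trans ?_
    rw [Real.enorm_of_nonneg (by positivity)]
    refine mul_le_mul_left ((mul_le_of_le_one_right'
      (eLpNorm_top_rexp_neg_mul_sq_norm_le _ (by positivity))).trans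
        (ENNReal.ofReal_le_ofReal ?_)) _
    gcongr
    exact le_mul_of_one_le_right hC (le_max_left _ _)

/-- **Weighted `L² → L^∞` and `L¹ → L^∞` kernel estimates for the heat semigroup on `ℝ^d`.**
Here `(T_t φ)(x) = ⟨x⟩^{-s} ∫ ∂^β_x K(t,x-y) ⟨y⟩^{-s} φ(y) dy`. -/
theorem heat_semigroup_weighted_Linfty_bounds
    (d : ℕ) (hd : 1 ≤ d) (β : Fin d → ℕ) (hβ : ∑ j, β j ≤ 1)
    (s : ℝ) (hs : s ∈ Set.Icc (0 : ℝ) ((∑ j, β j : ℕ) : ℝ)) :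
    ∃ C : ℝ, 0 ≤ C ∧
      ∀ t : ℝ, 0 < t →
        (∀ φ : Ed d → ℂ, MemLp φ 2 volume →
          eLpNorm
              (fun x => jap x ^ (-s) • ∫ y, (heatKernelDeriv d β t (x - y) * jap y ^ (-s)) • φ y)
              ⊤ volume ≤
            ENNReal.ofReal (C * t ^ (-(d : ℝ) / 4 - ((∑ j, β j : ℕ) : ℝ) / 2 - s / 2)) *
              eLpNorm φ 2 volume) ∧
        (∀ φ : Ed d → ℂ, MemLp φ 1 volume →
          eLpNorm
              (fun x => jap x ^ (-s) • ∫ y, (heatKernelDeriv d β t (x - y) * jap y ^ (-s)) • φ y)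
              ⊤ volume ≤
            ENNReal.ofReal (C * t ^ (-(d : ℝ) / 2 - ((∑ j, β j : ℕ) : ℝ) / 2 - s / 2)) *
              eLpNorm φ 1 volume) :=
  heat_semigroup_weighted_Linfty_bounds_general d β hβ s hs

end
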